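/- There exists an absolute constant C > 0 such that for all x, y ∈ (0, π/2) and all β ∈ [3/2, 2]: min( cot(y) · (cot(x))^{β−2}, cot(x) · (cot(y))^{β−2} ) ≤ C [ (cot(x) · cot(y))^β + 1_{{x+y ≥ π/2}} · cot(π − x − y) ]. -/

import Mathlib

/-!
With `a = cot x`, `b = cot y` the addition formula gives `cot (π - x - y) = (1 - ab) / (a + b)`,
and `x + y ≥ π / 2` exactly when `ab ≤ 1`, so the claim is an inequality in `a, b > 0`; by symmetry
`b ≤ a`. If `ab ≥ 1` then `a ≥ 1` and `b a^(β-2) = ab · a^(β-3) ≤ ab ≤ (ab)^β`. If `ab ≤ 1` then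
`b a^(β-2) ≤ 1 / a`, which is at most `4 (1 - ab) / (a + b)` when `ab ≤ 1/2`, and at most
`8 (ab)^β` when `ab ≥ 1/2`, since then `a > 1/2`.
-/

open Real Set

section RpowBounds

variable {a b β : ℝ}

theorem mul_rpow_sub_two_le_mul_rpow (ha : 0 < a) (hba : b ≤ a) (hab : 1 ≤ a * b)
    (hβ1 : 1 ≤ β) (hβ3 : β ≤ 3) : b * a ^ (β - 2) ≤ (a * b) ^ β := by
  have ha1 : 1 ≤ a := by nlinarith
  calc b * a ^ (β - 2) = a * b * a ^ (β - 3) := by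
        rw [show β - 2 = β - 3 + 1 by ring, rpow_add ha, rpow_one]; ring
    _ ≤ a * b * 1 := by
        gcongr
        exact rpow_le_one_of_one_le_of_nonpos ha1 (by linarith)
    _ ≤ (a * b) ^ β := by rw [mul_one]; exact self_le_rpow_of_one_le hab hβ1

theorem mul_rpow_sub_two_le_inv (ha : 0 < a) (hb : 0 ≤ b) (hba : b ≤ a) (hab : a * b ≤ 1)
    (hβ1 : 1 ≤ β) (hβ2 : β ≤ 2) : b * a ^ (β - 2) ≤ a⁻¹ := by
  have hle_one : b * a ^ (β - 1) ≤ 1 := by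
    rcases le_total a 1 with ha1 | ha1
    · exact mul_le_one₀ (hba.trans ha1) (by positivity)
        (rpow_le_one ha.le ha1 (by linarith))
    · calc b * a ^ (β - 1) ≤ b * a := by
            gcongr; exact rpow_le_self_of_one_le ha1 (by linarith)
        _ ≤ 1 := by linarith
  calc b * a ^ (β - 2) = b * a ^ (β - 1) * a⁻¹ := by
        rw [show β - 2 = β - 1 + -1 by ring, rpow_add ha, rpow_neg_one]; ring
    _ ≤ 1 * a⁻¹ := by gcongr
    _ = a⁻¹ := one_mul _

theorem inv_le_of_mul_le_one (ha : 0 < a) (hb : 0 < b) (hba : b ≤ a) (hab : a * b ≤ 1)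
    (hβ2 : β ≤ 2) : a⁻¹ ≤ 8 * ((a * b) ^ β + (1 - a * b) / (a + b)) := by
  have hpow : 0 ≤ (a * b) ^ β := by positivity
  have hfrac : 0 ≤ (1 - a * b) / (a + b) := div_nonneg (by linarith) (by positivity)
  rcases le_total (a * b) (1 / 2) with hsmall | hlarge
  · have : (4 * a)⁻¹ ≤ (1 - a * b) / (a + b) := by
      rw [inv_eq_one_div, div_le_div_iff₀ (by positivity) (by positivity)]
      nlinarith
    rw [mul_inv, show (4 : ℝ)⁻¹ = 1 / 4 by norm_num] at this
    linarith
  · have hsq : (a * b) ^ (2 : ℝ) ≤ (a * b) ^ β :=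
      rpow_le_rpow_of_exponent_ge (by positivity) hab hβ2
    rw [rpow_two] at hsq
    have ha2 : 1 / 2 < a := by nlinarith
    have : a⁻¹ < 2 := by rw [inv_lt_comm₀ ha (by norm_num)]; linarith
    nlinarith

theorem mul_rpow_sub_two_le (ha : 0 < a) (hb : 0 < b) (hba : b ≤ a) (hβ : β ∈ Icc (1 : ℝ) 2) :
    b * a ^ (β - 2) ≤
      8 * ((a * b) ^ β + if a * b ≤ 1 then (1 - a * b) / (a + b) else 0) := by
  have hpow : 0 ≤ (a * b) ^ β := by positivity
  split_ifs with hab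
  · calc b * a ^ (β - 2) ≤ a⁻¹ := mul_rpow_sub_two_le_inv ha hb.le hba hab hβ.1 hβ.2
      _ ≤ _ := inv_le_of_mul_le_one ha hb hba hab hβ.2
  · have := mul_rpow_sub_two_le_mul_rpow ha hba (not_le.1 hab).le hβ.1 (by linarith [hβ.2])
    linarith

theorem min_mul_rpow_sub_two_le (ha : 0 < a) (hb : 0 < b) (hβ : β ∈ Icc (1 : ℝ) 2) :
    min (b * a ^ (β - 2)) (a * b ^ (β - 2)) ≤
      8 * ((a * b) ^ β + if a * b ≤ 1 then (1 - a * b) / (a + b) else 0) := by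
  rcases le_total b a with hba | hab
  · exact (min_le_left _ _).trans (mul_rpow_sub_two_le ha hb hba hβ)
  · rw [mul_comm a b, add_comm a b]
    exact (min_le_right _ _).trans (mul_rpow_sub_two_le hb ha hab hβ)

end RpowBounds

section Cot

variable {x y : ℝ}

theorem cot_pos_of_mem_Ioo (hx : x ∈ Ioo 0 (π / 2)) : 0 < cot x := by
  rw [cot_eq_cos_div_sin]
  exact div_pos (cos_pos_of_mem_Ioo ⟨by linarith [hx.1, pi_pos], hx.2⟩)
    (sin_pos_of_pos_of_lt_pi hx.1 (by linarith [hx.2, pi_pos]))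

theorem cot_pi_sub_sub (hx : sin x ≠ 0) (hy : sin y ≠ 0) :
    cot (π - x - y) = (1 - cot x * cot y) / (cot x + cot y) := by
  have hnum : 1 - cot x * cot y = -cos (x + y) / (sin x * sin y) := by
    rw [cot_eq_cos_div_sin, cot_eq_cos_div_sin, cos_add]; field_simp; ring
  have hden : cot x + cot y = sin (x + y) / (sin x * sin y) := by
    rw [cot_eq_cos_div_sin, cot_eq_cos_div_sin, sin_add]; field_simp; ring
  rw [hnum, hden, div_div_div_cancel_right₀ (mul_ne_zero hx hy), sub_sub, cot_eq_cos_div_sin,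
    cos_pi_sub, sin_pi_sub]

theorem pi_div_two_le_add_iff_cot_mul_cot_le_one (hx : x ∈ Ioo 0 (π / 2))
    (hy : y ∈ Ioo 0 (π / 2)) : π / 2 ≤ x + y ↔ cot x * cot y ≤ 1 := by
  obtain ⟨hx0, hx2⟩ := hx
  obtain ⟨hy0, hy2⟩ := hy
  have hsx : 0 < sin x := sin_pos_of_pos_of_lt_pi hx0 (by linarith [pi_pos])
  have hsy : 0 < sin y := sin_pos_of_pos_of_lt_pi hy0 (by linarith [pi_pos])
  have hcot : cot x * cot y ≤ 1 ↔ cos (x + y) ≤ 0 := by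
    rw [cot_eq_cos_div_sin, cot_eq_cos_div_sin, div_mul_div_comm,
      div_le_one (mul_pos hsx hsy), cos_add, sub_nonpos]
  rw [hcot]
  constructor
  · intro h
    exact cos_nonpos_of_pi_div_two_le_of_le h (by linarith)
  · intro h
    by_contra! hlt
    exact (cos_pos_of_mem_Ioo ⟨by linarith, hlt⟩).not_ge h

end Cot

theorem min_cot_mix_le :
    ∃ C : ℝ, 0 < C ∧
      ∀ x ∈ Ioo (0 : ℝ) (π / 2), ∀ y ∈ Ioo (0 : ℝ) (π / 2),
        ∀ β ∈ Icc (3 / 2 : ℝ) 2,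
          min (Real.cot y * Real.cot x ^ (β - 2)) (Real.cot x * Real.cot y ^ (β - 2))
            ≤ C * ((Real.cot x * Real.cot y) ^ β
                + (if π / 2 ≤ x + y then Real.cot (π - x - y) else 0)) := by
  refine ⟨8, by norm_num, fun x hx y hy β hβ => ?_⟩
  have hsin {z : ℝ} (hz : z ∈ Ioo 0 (π / 2)) : sin z ≠ 0 :=
    (sin_pos_of_pos_of_lt_pi hz.1 (by linarith [hz.2, pi_pos])).ne'
  rw [if_congr (pi_div_two_le_add_iff_cot_mul_cot_le_one hx hy)
    (cot_pi_sub_sub (hsin hx) (hsin hy)) rfl]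
  exact min_mul_rpow_sub_two_le (cot_pos_of_mem_Ioo hx) (cot_pos_of_mem_Ioo hy)
    ⟨by linarith [hβ.1], hβ.2⟩
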